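/- Let T be a tree and v a vertex of T, and let T' be obtained from T by attaching a new leaf v' adjacent to v. If some maximum dissociation set of T does not contain v, then ψ(T') = ψ(T) + 1, every maximum dissociation set of T' contains v', and the number of maximum dissociation sets of T not containing v is at most the number of maximum dissociation sets of T'. -/

import Mathlib

/-!
If `F` is a maximum dissociation set of `T` avoiding `v`, then the new leaf `v'` has no neighbour
in `F ∪ {v'}`, so `F ∪ {v'}` is a dissociation set of `T'` and `ψ(T') ≥ ψ(T) + 1`. Conversely,
removing `v'` from a dissociation set of `T'` leaves one of `T`, so `ψ(T') ≤ ψ(T) + 1`, with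
equality only if `v'` was there. The injective map `F ↦ F ∪ {v'}` gives the counting bound.
-/

open Finset

variable {V : Type*} [Fintype V] [DecidableEq V]

/-- `F` is a dissociation set: it induces a subgraph of maximum degree at most 1,
i.e. every vertex of `F` has at most one neighbor in `F`. -/
def IsDissoc (G : SimpleGraph V) (F : Finset V) : Prop :=
  ∀ v ∈ F, ∀ u ∈ F, ∀ w ∈ F, G.Adj v u → G.Adj v w → u = w

open Classical in
/-- The dissociation number: maximum cardinality of a dissociation set. -/
noncomputable def dissocNum (G : SimpleGraph V) : ℕ :=
  (Finset.univ.filter fun F : Finset V => IsDissoc G F).sup Finset.card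

/-- A maximum dissociation set. -/
def IsMaxDissoc (G : SimpleGraph V) (F : Finset V) : Prop :=
  IsDissoc G F ∧ F.card = dissocNum G

open Classical in
/-- The number of maximum dissociation sets. -/
noncomputable def numMaxDissoc (G : SimpleGraph V) : ℕ :=
  (Finset.univ.filter fun F : Finset V => IsMaxDissoc G F).card

/-- The graph obtained from `G` by attaching a new leaf `none` adjacent to the vertex `v`. -/
def addLeaf (G : SimpleGraph V) (v : V) : SimpleGraph (Option V) :=
  SimpleGraph.fromRel fun x y =>
    (∃ a b, x = some a ∧ y = some b ∧ G.Adj a b) ∨ (x = some v ∧ y = none)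

section

variable {α : Type*} {G : SimpleGraph α} {v : α}

@[simp]
lemma addLeaf_adj_some_some {a b : α} : (addLeaf G v).Adj (some a) (some b) ↔ G.Adj a b := by
  simpa [addLeaf, G.adj_comm b a] using SimpleGraph.Adj.ne

@[simp]
lemma addLeaf_adj_some_none {a : α} : (addLeaf G v).Adj (some a) none ↔ a = v := by
  simp [addLeaf]

@[simp]
lemma addLeaf_adj_none_some {a : α} : (addLeaf G v).Adj none (some a) ↔ a = v := by
  simp [addLeaf, eq_comm]

@[simp]
lemma addLeaf_not_adj_none_none : ¬(addLeaf G v).Adj none none :=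
  (addLeaf G v).loopless.irrefl none

open Classical in
lemma IsDissoc.card_le_dissocNum [Fintype α] {F : Finset α} (hF : IsDissoc G F) :
    #F ≤ dissocNum G :=
  le_sup (mem_filter.2 ⟨mem_univ F, hF⟩)

lemma IsDissoc.eraseNone {F : Finset (Option α)} (hF : IsDissoc (addLeaf G v) F) :
    IsDissoc G (eraseNone F) := by
  intro a ha b hb c hc hab hac
  simp only [mem_eraseNone] at ha hb hc
  exact Option.some_injective _ (hF _ ha _ hb _ hc (by simpa) (by simpa))

lemma IsDissoc.insertNone {F : Finset α} (hF : IsDissoc G F) (hv : v ∉ F) :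
    IsDissoc (addLeaf G v) (insertNone F) := by
  rintro (_ | a) ha (_ | b) hb (_ | c) hc hab hac <;>
    simp only [some_mem_insertNone, addLeaf_adj_some_some, addLeaf_adj_some_none,
      addLeaf_adj_none_some, addLeaf_not_adj_none_none] at * <;>
    first | rfl | (subst_vars; contradiction) | exact congrArg some (hF a ha b hb c hc hab hac)

lemma card_le_card_eraseNone_add_one (F : Finset (Option α)) : #F ≤ #(eraseNone F) + 1 :=
  calc #F ≤ #(insertNone (eraseNone F)) := card_le_card <| by rintro (_ | a) h <;> simp [h]
    _ = #(eraseNone F) + 1 := card_insertNone _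

variable [Fintype α]

lemma dissocNum_addLeaf_le : dissocNum (addLeaf G v) ≤ dissocNum G + 1 := by
  classical
  refine Finset.sup_le fun F hF => ?_
  calc #F ≤ #(eraseNone F) + 1 := card_le_card_eraseNone_add_one F
    _ ≤ dissocNum G + 1 := by gcongr; exact (mem_filter.1 hF).2.eraseNone.card_le_dissocNum

lemma dissocNum_addLeaf_of_isMaxDissoc {F : Finset α} (hF : IsMaxDissoc G F) (hv : v ∉ F) :
    dissocNum (addLeaf G v) = dissocNum G + 1 := by
  refine dissocNum_addLeaf_le.antisymm ?_
  calc dissocNum G + 1 = #(insertNone F) := by rw [card_insertNone, hF.2]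
    _ ≤ dissocNum (addLeaf G v) := (hF.1.insertNone hv).card_le_dissocNum

lemma IsMaxDissoc.insertNone {F : Finset α} (hF : IsMaxDissoc G F) (hv : v ∉ F) :
    IsMaxDissoc (addLeaf G v) (insertNone F) :=
  ⟨hF.1.insertNone hv, by rw [card_insertNone, hF.2, dissocNum_addLeaf_of_isMaxDissoc hF hv]⟩

lemma none_mem_of_isMaxDissoc_addLeaf (hnum : dissocNum (addLeaf G v) = dissocNum G + 1)
    {F : Finset (Option α)} (hF : IsMaxDissoc (addLeaf G v) F) : none ∈ F := by
  by_contra hnone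
  have := hF.1.eraseNone.card_le_dissocNum
  rw [card_eraseNone_of_not_mem hnone, hF.2, hnum] at this
  omega

end

open Classical in
theorem stmt_17_general (G : SimpleGraph V) (v : V)
    (h : ∃ F : Finset V, IsMaxDissoc G F ∧ v ∉ F) :
    dissocNum (addLeaf G v) = dissocNum G + 1 ∧
      (∀ F : Finset (Option V), IsMaxDissoc (addLeaf G v) F → none ∈ F) ∧
      (Finset.univ.filter fun F : Finset V => IsMaxDissoc G F ∧ v ∉ F).card ≤
        numMaxDissoc (addLeaf G v) := by
  obtain ⟨F₀, hF₀, hv⟩ := h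
  have hnum := dissocNum_addLeaf_of_isMaxDissoc hF₀ hv
  refine ⟨hnum, fun F hF => none_mem_of_isMaxDissoc_addLeaf hnum hF, ?_⟩
  refine card_le_card_of_injOn insertNone (fun F hF => ?_) insertNone.injective.injOn
  simp only [coe_filter, Set.mem_ofPred_eq, mem_univ, true_and] at hF ⊢
  exact hF.1.insertNone hF.2

open Classical in
/-- If some maximum dissociation set of the tree `T` avoids `v`, then attaching a leaf `v'`
at `v` increases the dissociation number by exactly one, every maximum dissociation set of
the new tree contains `v'`, and the number of maximum dissociation sets of `T` avoiding `v`
is at most the number of maximum dissociation sets of the new tree. -/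
theorem stmt_17 (G : SimpleGraph V) (hT : G.IsTree) (v : V)
    (h : ∃ F : Finset V, IsMaxDissoc G F ∧ v ∉ F) :
    dissocNum (addLeaf G v) = dissocNum G + 1 ∧
      (∀ F : Finset (Option V), IsMaxDissoc (addLeaf G v) F → none ∈ F) ∧
      (Finset.univ.filter fun F : Finset V => IsMaxDissoc G F ∧ v ∉ F).card ≤
        numMaxDissoc (addLeaf G v) :=
  stmt_17_general G v h
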